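/- (Proper time from chain abundances.) Let n ≥ 2 be an integer, T > 0, and R, R₀₀ arbitrary real numbers. With α_k = -nk/(12(kn+2)((k+1)n+2)) and β_k = nk/(12((k+1)n+2)), define for k = 1,2,3: Q_k = T^{3n}·( 1 + (3/k)·α_k·R·T² + (3/k)·β_k·R₀₀·T² ) and J_k = (kn+2)·((k+1)n+2)·Q_k. Then J₁ - 2J₂ + J₃ = 2n²·T^{3n}. -/
import Mathlib


/-- `α_k = -nk/(12(kn+2)((k+1)n+2))`, the coefficient of the scalar curvature `R(0)` in the
curvature expansion of the expected number of k-chains in a small causal diamond. -/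
noncomputable def alphaCoeff (n k : ℕ) : ℝ :=
  -((n : ℝ) * k) / (12 * ((k : ℝ) * n + 2) * (((k : ℝ) + 1) * n + 2))

/-- `β_k = nk/(12((k+1)n+2))`, the coefficient of `R₀₀(0)` in the curvature expansion of
the expected number of k-chains in a small causal diamond. -/
noncomputable def betaCoeff (n k : ℕ) : ℝ :=
  (n : ℝ) * k / (12 * (((k : ℝ) + 1) * n + 2))

/-- The ρ-independent combination `Q_k = T^{3n}(1 + (3/k)α_k R T² + (3/k)β_k R₀₀ T²)`
of k-chain abundances, truncated at its leading curvature correction. -/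
noncomputable def Qchain (n : ℕ) (T R R₀₀ : ℝ) (k : ℕ) : ℝ :=
  T ^ (3 * n) *
    (1 + (3 / (k : ℝ)) * alphaCoeff n k * R * T ^ 2 +
      (3 / (k : ℝ)) * betaCoeff n k * R₀₀ * T ^ 2)

/-- `J_k = (kn+2)((k+1)n+2)·Q_k`. -/
noncomputable def Jchain (n : ℕ) (T R R₀₀ : ℝ) (k : ℕ) : ℝ :=
  ((k : ℝ) * n + 2) * (((k : ℝ) + 1) * n + 2) * Qchain n T R R₀₀ k

/-- Proper time from chain abundances: `J₁ - 2J₂ + J₃ = 2n²·T^{3n}`, independently of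
`R` and `R₀₀`. -/
theorem stmt13 (n : ℕ) (hn : 2 ≤ n) (T R R₀₀ : ℝ) (hT : 0 < T) :
    Jchain n T R R₀₀ 1 - 2 * Jchain n T R R₀₀ 2 + Jchain n T R R₀₀ 3 =
      2 * (n : ℝ) ^ 2 * T ^ (3 * n) := by
  have hn0 : (0:ℝ) < (n:ℝ) := by positivity
  have h1 : ((1:ℝ)+1) * n + 2 ≠ 0 := by positivity
  have h2 : ((2:ℝ)+1) * n + 2 ≠ 0 := by positivity
  have h3 : ((3:ℝ)+1) * n + 2 ≠ 0 := by positivity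
  simp only [Jchain, Qchain, alphaCoeff, betaCoeff]
  push_cast
  field_simp
  ring
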